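/- arXiv:1702.03526 — 2 statements merged into one kernel-verified Lean document; each statement's English description precedes it below -/
import Mathlib

section
/- Let V be a real inner product space with skew-adjoint endomorphisms γ₁, γ₂ satisfying the Clifford relations γ_αγ_β + γ_βγ_α = −2δ_{αβ}·id. Define Q : V ⊕ V → V ⊕ V on χ = (χ¹, χ²) by Q(χ) = −(1/2)(γ_βγ_1 χ^β, γ_βγ_2 χ^β) (summation over β). Then Q is a linear projection, i.e. Q² = Q, and its image is exactly the kernel of the map δ_γ(χ¹,χ²) = γ₁χ¹ + γ₂χ². -/
open scoped RealInnerProductSpace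

theorem gravitino_projection_idempotent_and_range
    {V : Type*} [NormedAddCommGroup V] [InnerProductSpace ℝ V]
    (γ : Fin 2 → V →ₗ[ℝ] V)
    (hcl : ∀ α β : Fin 2, γ α ∘ₗ γ β + γ β ∘ₗ γ α
      = if α = β then (-2 : ℝ) • (LinearMap.id : V →ₗ[ℝ] V) else 0)
    (hskew : ∀ (α : Fin 2) (v w : V), ⟪γ α v, w⟫ = -⟪v, γ α w⟫)
    (Q : V × V → V × V) (δ : V × V → V)
    -- Q(χ)_α = −(1/2) Σ_β γ_β γ_α χ^β
    (hQ : ∀ χ : V × V, Q χ = (-(1 / 2) : ℝ) •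
      ((γ 0 (γ 0 χ.1) + γ 1 (γ 0 χ.2)), (γ 0 (γ 1 χ.1) + γ 1 (γ 1 χ.2))))
    -- δ_γ(χ¹, χ²) = γ₁χ¹ + γ₂χ²
    (hδ : ∀ χ : V × V, δ χ = γ 0 χ.1 + γ 1 χ.2) :
    (∀ χ : V × V, Q (Q χ) = Q χ) ∧ Set.range Q = {χ : V × V | δ χ = 0} := by
  have h00 : ∀ v : V, γ 0 (γ 0 v) = -v := by
    intro v
    have h := DFunLike.congr_fun (hcl 0 0) v
    simp only [LinearMap.add_apply, LinearMap.comp_apply, if_pos rfl, if_true,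
      LinearMap.smul_apply, LinearMap.id_apply] at h
    have h2 : (2:ℝ) • γ 0 (γ 0 v) = (2:ℝ) • (-v) := by
      rw [two_smul, h]; module
    exact smul_right_injective V two_ne_zero h2
  have h11 : ∀ v : V, γ 1 (γ 1 v) = -v := by
    intro v
    have h := DFunLike.congr_fun (hcl 1 1) v
    simp only [LinearMap.add_apply, LinearMap.comp_apply, if_pos rfl, if_true,
      LinearMap.smul_apply, LinearMap.id_apply] at h
    have h2 : (2:ℝ) • γ 1 (γ 1 v) = (2:ℝ) • (-v) := by
      rw [two_smul, h]; module
    exact smul_right_injective V two_ne_zero h2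
  have h10 : ∀ v : V, γ 1 (γ 0 v) = -γ 0 (γ 1 v) := by
    intro v
    have h := DFunLike.congr_fun (hcl 1 0) v
    simp only [LinearMap.add_apply, LinearMap.comp_apply, if_neg (by decide : (1:Fin 2) ≠ 0),
      LinearMap.zero_apply] at h
    exact eq_neg_of_add_eq_zero_left h
  constructor
  · intro χ
    rw [hQ, hQ χ]
    simp only [Prod.smul_fst, Prod.smul_snd, map_smul, map_add, map_neg, h00, h11, h10]
    ext
    · simp only [Prod.smul_fst]
      module
    · simp only [Prod.smul_snd]
      module
  · ext χ
    simp only [Set.mem_range, Set.mem_setOf_eq]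
    constructor
    · rintro ⟨y, rfl⟩
      rw [hδ, hQ]
      simp only [Prod.smul_fst, Prod.smul_snd, map_smul, map_add, map_neg, h00, h11, h10]
      module
    · intro h
      refine ⟨χ, ?_⟩
      rw [hδ] at h
      have e0 := congrArg (γ 0) h
      have e1 := congrArg (γ 1) h
      simp only [map_add, map_zero, map_neg, h00, h11, h10] at e0 e1
      rw [hQ]
      simp only [map_add, map_neg, h00, h11, h10]
      ext
      · simp only [Prod.smul_fst]
        linear_combination (norm := module) ((1:ℝ)/2) • e0
      · simp only [Prod.smul_snd]
        linear_combination (norm := module) ((1:ℝ)/2) • e1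
end

section
/- Let T : B₁* → ℂ be holomorphic on the punctured unit disk B₁* = B₁ \ {0} and suppose |T| is integrable on B_r for every 0 < r < 1. Then T has at 0 a pole of order at most one; in particular the function z ↦ z·T(z) extends holomorphically to all of B₁. -/
/-!
Near `0`, the disc `B(z, |z|/2)` lies in the punctured disc, and integrating the mean-value
property of `T` over circles centred at `z` gives `(π/4) |z|² |T z| ≤ ∫_{B(z,|z|/2)} |T|`.
Since these discs shrink, absolute continuity of the integral makes the right side tend to `0`,
so `z * T z = o(1/z)` and Riemann's removable singularity theorem extends `z * T z` across `0`.
-/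

open MeasureTheory Metric Set Filter Topology Real Asymptotics

section PolarCoord

variable {E : Type*} [NormedAddCommGroup E] [NormedSpace ℝ E]

theorem circleMap_eq_add_polarCoord_symm (c : ℂ) (t θ : ℝ) :
    circleMap c t θ = c + Complex.polarCoord.symm (t, θ) := by
  rw [Complex.polarCoord_symm_apply, circleMap, Complex.exp_mul_I]
  push_cast
  ring

theorem setIntegral_ball_eq_setIntegral_polarCoord (g : ℂ → E) (c : ℂ) (s : ℝ) :
    ∫ w in ball c s, g w = ∫ p in Ioo 0 s ×ˢ Ioo (-π) π, p.1 • g (circleMap c p.1 p.2) := by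
  have htranslate : ∫ w in ball c s, g w = ∫ v in ball 0 s, g (c + v) := by
    rw [← (measurePreserving_add_left volume c).setIntegral_preimage_emb
      (measurableEmbedding_addLeft c)]
    simp
  have hpolar : polarCoord.target ∩ Complex.polarCoord.symm ⁻¹' ball 0 s =
      Ioo 0 s ×ˢ Ioo (-π) π := by
    ext ⟨t, θ⟩
    simp only [polarCoord_target, mem_inter_iff, mem_preimage, mem_ball_zero_iff,
      Complex.norm_polarCoord_symm, mem_prod, mem_Ioi, mem_Ioo]
    constructor
    · rintro ⟨⟨ht, hθ⟩, hts⟩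
      exact ⟨⟨ht, (le_abs_self t).trans_lt hts⟩, hθ⟩
    · rintro ⟨⟨ht, hts⟩, hθ⟩
      exact ⟨⟨ht, hθ⟩, by rwa [abs_of_pos ht]⟩
  have hmeas : MeasurableSet (Complex.polarCoord.symm ⁻¹' ball 0 s) :=
    measurableSet_ball.preimage <|
      Complex.measurableEquivRealProd.symm.measurable.comp continuous_polarCoord_symm.measurable
  rw [htranslate, ← integral_indicator measurableSet_ball, ← Complex.integral_comp_polarCoord_symm,
    ← hpolar, ← setIntegral_indicator hmeas]
  congr 1 with p
  by_cases hp : Complex.polarCoord.symm p ∈ ball 0 s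
  · rw [indicator_of_mem hp, indicator_of_mem (mem_preimage.2 hp),
      circleMap_eq_add_polarCoord_symm]
  · rw [indicator_of_notMem hp, indicator_of_notMem (mt mem_preimage.1 hp), smul_zero]

theorem setIntegral_Ioo_neg_pi_pi_circleMap (g : ℂ → E) (c : ℂ) (t : ℝ) :
    ∫ θ in Ioo (-π) π, g (circleMap c t θ) = (2 * π) • circleAverage g c t := by
  have hperiod := ((periodic_circleMap c t).comp g).intervalIntegral_add_eq (-π) 0
  rw [show -π + 2 * π = π by ring, zero_add] at hperiod
  rw [circleAverage_def, smul_inv_smul₀ two_pi_pos.ne', ← integral_Ioc_eq_integral_Ioo,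
    ← intervalIntegral.integral_of_le (by linarith [pi_pos])]
  exact hperiod

theorem integral_ball_eq_intervalIntegral_circleAverage {g : ℂ → E} {c : ℂ} {s : ℝ} (hs : 0 ≤ s)
    (hg : ContinuousOn g (closedBall c s)) :
    ∫ w in ball c s, g w = ∫ t in 0..s, (2 * π * t) • circleAverage g c t := by
  have hmaps : MapsTo (fun p : ℝ × ℝ => circleMap c p.1 p.2) (Icc 0 s ×ˢ Icc (-π) π)
      (closedBall c s) := fun p hp => by
    simpa [dist_eq_norm, abs_of_nonneg hp.1.1] using hp.1.2
  have hint : IntegrableOn (fun p : ℝ × ℝ => p.1 • g (circleMap c p.1 p.2))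
      (Ioo 0 s ×ˢ Ioo (-π) π) := by
    refine ContinuousOn.integrableOn_compact (isCompact_Icc.prod isCompact_Icc) ?_
      |>.mono_set (prod_mono Ioo_subset_Icc_self Ioo_subset_Icc_self)
    exact continuousOn_fst.smul (hg.comp (by fun_prop) hmaps)
  rw [setIntegral_ball_eq_setIntegral_polarCoord, Measure.volume_eq_prod, setIntegral_prod _ hint,
    intervalIntegral.integral_of_le hs, integral_Ioc_eq_integral_Ioo]
  refine setIntegral_congr_fun measurableSet_Ioo fun t _ => ?_
  rw [integral_smul, setIntegral_Ioo_neg_pi_pi_circleMap, smul_smul, mul_comm t]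

theorem norm_circleAverage_le (f : ℂ → E) (c : ℂ) (R : ℝ) :
    ‖circleAverage f c R‖ ≤ circleAverage (fun z => ‖f z‖) c R := by
  rw [circleAverage_def, circleAverage_def, norm_smul, smul_eq_mul, norm_inv,
    Real.norm_of_nonneg two_pi_pos.le]
  gcongr
  exact intervalIntegral.norm_integral_le_integral_norm two_pi_pos.le

end PolarCoord

theorem DiffContOnCl.pi_mul_sq_mul_norm_le_integral_ball_norm {F : Type*} [NormedAddCommGroup F]
    [NormedSpace ℂ F] [CompleteSpace F] {f : ℂ → F} {c : ℂ} {s : ℝ} (hs : 0 < s)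
    (hf : DiffContOnCl ℂ f (ball c s)) :
    π * s ^ 2 * ‖f c‖ ≤ ∫ w in ball c s, ‖f w‖ := by
  have hcont : ContinuousOn (fun z => ‖f z‖) (closedBall c s) := by
    simpa [closure_ball c hs.ne'] using hf.continuousOn.norm
  have hmean : ∀ t ∈ Ioo 0 s, ‖f c‖ ≤ Real.circleAverage (fun z => ‖f z‖) c t := fun t ht => by
    have hft : DiffContOnCl ℂ f (ball c |t|) :=
      hf.mono (ball_subset_ball ((abs_of_pos ht.1).trans_le ht.2.le))
    simpa [hft.circleAverage] using norm_circleAverage_le f c t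
  have havg : IntervalIntegrable (fun t => 2 * π * t * Real.circleAverage (fun z => ‖f z‖) c t)
      volume 0 s := by
    refine ContinuousOn.intervalIntegrable_of_Icc hs.le (ContinuousOn.mul (by fun_prop) ?_)
    refine ContinuousOn.circleAverage (hcont.mono fun z hz => ?_) fun t ht => ht.1
    simpa [dist_eq_norm] using hz.2
  calc π * s ^ 2 * ‖f c‖ = ∫ t in 0..s, 2 * π * t * ‖f c‖ := by
        rw [intervalIntegral.integral_mul_const, intervalIntegral.integral_const_mul, integral_id]
        ring
    _ ≤ ∫ t in 0..s, 2 * π * t * Real.circleAverage (fun z => ‖f z‖) c t :=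
        intervalIntegral.integral_mono_on_of_le_Ioo hs.le
          ((by fun_prop : Continuous _).intervalIntegrable _ _) havg fun t ht =>
          mul_le_mul_of_nonneg_left (hmean t ht) (by nlinarith [pi_pos, ht.1])
    _ = ∫ w in ball c s, ‖f w‖ := by
        rw [integral_ball_eq_intervalIntegral_circleAverage hs.le hcont]
        simp only [smul_eq_mul]

theorem tendsto_addHaar_ball_of_tendsto_radius {E ι : Type*} [NormedAddCommGroup E]
    [NormedSpace ℝ E] [FiniteDimensional ℝ E] [Nontrivial E] [MeasurableSpace E] [BorelSpace E]
    (μ : Measure E) [μ.IsAddHaarMeasure] {l : Filter ι} {x : ι → E} {r : ι → ℝ}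
    (hr : Tendsto r l (𝓝 0)) :
    Tendsto (fun i => μ (ball (x i) (r i))) l (𝓝 0) := by
  have hclosed : Tendsto (fun i => μ (closedBall (x i) |r i|)) l (𝓝 0) := by
    simp_rw [Measure.addHaar_closedBall μ _ (abs_nonneg _)]
    have hpow : Tendsto (fun i => ENNReal.ofReal (|r i| ^ Module.finrank ℝ E)) l (𝓝 0) := by
      simpa [zero_pow Module.finrank_pos.ne'] using
        ENNReal.tendsto_ofReal (hr.abs.pow (Module.finrank ℝ E))
    simpa using ENNReal.Tendsto.mul_const hpow (Or.inr measure_ball_lt_top.ne)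
  exact tendsto_of_tendsto_of_tendsto_of_le_of_le tendsto_const_nhds hclosed (fun _ => zero_le)
    fun i => measure_mono <|
      ball_subset_closedBall.trans (closedBall_subset_closedBall (le_abs_self _))

theorem closedBall_norm_div_two_subset {z : ℂ} (hz : z ≠ 0) :
    closedBall z (‖z‖ / 2) ⊆ ball 0 (2 * ‖z‖) \ {0} := by
  have hpos : 0 < ‖z‖ := norm_pos_iff.2 hz
  intro w hw
  rw [mem_closedBall, dist_eq_norm] at hw
  refine ⟨mem_ball_iff_norm.2 ?_, fun hw0 => ?_⟩
  · calc ‖w - 0‖ = ‖z + (w - z)‖ := by rw [sub_zero, add_sub_cancel]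
      _ ≤ ‖z‖ + ‖w - z‖ := norm_add_le _ _
      _ < 2 * ‖z‖ := by linarith
  · rw [mem_singleton_iff.1 hw0, zero_sub, norm_neg] at hw
    linarith

theorem tendsto_sq_smul_nhdsNE_zero_of_integrableOn {F : Type*} [NormedAddCommGroup F]
    [NormedSpace ℂ F] [CompleteSpace F] {T : ℂ → F} {ρ : ℝ} (hρ : 0 < ρ)
    (hT : DifferentiableOn ℂ T (ball 0 ρ \ {0})) (hint : IntegrableOn T (ball 0 ρ \ {0})) :
    Tendsto (fun z => z ^ 2 • T z) (𝓝[≠] 0) (𝓝 0) := by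
  set K := ball (0 : ℂ) ρ \ {0}
  have hsub : ∀ᶠ z in 𝓝[≠] (0 : ℂ), z ≠ 0 ∧ closedBall z (‖z‖ / 2) ⊆ K := by
    have hsmall : ∀ᶠ z in 𝓝[≠] (0 : ℂ), ‖z‖ < ρ / 2 :=
      eventually_nhdsWithin_of_eventually_nhds
        (eventually_norm_sub_lt (0 : ℂ) (half_pos hρ) |>.mono fun z hz => by simpa using hz)
    filter_upwards [hsmall, self_mem_nhdsWithin] with z hz hz0
    exact ⟨hz0, (closedBall_norm_div_two_subset hz0).trans
      (sdiff_subset_sdiff_left (ball_subset_ball (by linarith)))⟩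
  have hbound : ∀ᶠ z in 𝓝[≠] (0 : ℂ),
      ‖z ^ 2 • T z‖ ≤ 4 / π * ∫ w in ball z (‖z‖ / 2), ‖T w‖ ∂volume.restrict K := by
    filter_upwards [hsub] with z ⟨hz0, hzK⟩
    have hmean := (hT.diffContOnCl_ball hzK).pi_mul_sq_mul_norm_le_integral_ball_norm
      (half_pos (norm_pos_iff.2 hz0))
    rw [Measure.restrict_restrict measurableSet_ball,
      inter_eq_left.2 (ball_subset_closedBall.trans hzK), norm_smul, norm_pow]
    calc ‖z‖ ^ 2 * ‖T z‖ = 4 / π * (π * (‖z‖ / 2) ^ 2 * ‖T z‖) := by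
          field_simp
          ring
      _ ≤ _ := by gcongr
  have hvanish : Tendsto (fun z => ∫ w in ball z (‖z‖ / 2), ‖T w‖ ∂volume.restrict K)
      (𝓝[≠] 0) (𝓝 0) := by
    refine hint.norm.tendsto_setIntegral_nhds_zero ?_
    refine tendsto_of_tendsto_of_tendsto_of_le_of_le tendsto_const_nhds
      (tendsto_addHaar_ball_of_tendsto_radius volume ?_) (fun _ => zero_le)
      fun z => Measure.restrict_apply_le _ _
    simpa using (continuous_norm.tendsto (0 : ℂ)).div_const 2 |>.mono_left nhdsWithin_le_nhds
  simpa using squeeze_zero_norm' hbound (by simpa using hvanish.const_mul (4 / π))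

theorem integrable_holomorphic_has_pole_order_at_most_one
    (T : ℂ → ℂ)
    (hT : DifferentiableOn ℂ T (ball (0 : ℂ) 1 \ {0}))
    (hint : ∀ r : ℝ, 0 < r → r < 1 → IntegrableOn T (ball (0 : ℂ) r \ {0}) volume) :
    ∃ g : ℂ → ℂ, DifferentiableOn ℂ g (ball (0 : ℂ) 1) ∧
      ∀ z ∈ ball (0 : ℂ) 1 \ {0}, g z = z * T z := by
  set f : ℂ → ℂ := fun z => z * T z
  have hdecay : Tendsto (fun z => z ^ 2 * T z) (𝓝[≠] 0) (𝓝 0) :=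
    tendsto_sq_smul_nhdsNE_zero_of_integrableOn (by norm_num : (0 : ℝ) < 1 / 2)
      (hT.mono (sdiff_subset_sdiff_left (ball_subset_ball (by norm_num))))
      (hint _ (by norm_num) (by norm_num))
  have hlittleO : (fun z => f z - f 0) =o[𝓝[≠] 0] fun z => (z - 0)⁻¹ := by
    refine ((isLittleO_one_iff ℂ).2 hdecay).mul_isBigO (isBigO_refl (fun z : ℂ => z⁻¹) _)
      |>.congr' ?_ (by simp)
    filter_upwards [self_mem_nhdsWithin] with z hz
    simp only [f, zero_mul, sub_zero]
    field_simp
  exact ⟨Function.update f 0 (limUnder (𝓝[≠] 0) f),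
    Complex.differentiableOn_update_limUnder_of_isLittleO (ball_mem_nhds 0 one_pos)
      (differentiableOn_id.mul hT) hlittleO,
    fun z hz => Function.update_of_ne hz.2 _ _⟩
end
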